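/- Let H be a bialgebra over a commutative ring R, F a Drinfel'd twist on H with R-matrix ℛ := F₂₁ · F⁻¹ and ℛ⁻¹ = τ(ℛ) = Σ_k R_k ⊗ R^k, and let L be a Lie algebra in H-modules with twisted bracket [x, y]_⋆ := Σ_k ⁅f̄^k(x), f̄_k(y)⁆. Then the twisted bracket is braided antisymmetric: [x, y]_⋆ = − Σ_k [R_k(y), R^k(x)]_⋆ for all x, y ∈ L. -/

import Mathlib

open scoped TensorProduct

noncomputable section

/-- `Δ ⊗ id` as an algebra homomorphism `H ⊗ H → (H ⊗ H) ⊗ H`. -/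
def comulTensorId (R H : Type*) [CommRing R] [Ring H] [Bialgebra R H] :
    (H ⊗[R] H) →ₐ[R] (H ⊗[R] H) ⊗[R] H :=
  Algebra.TensorProduct.map (Bialgebra.comulAlgHom R H) (AlgHom.id R H)

/-- `id ⊗ Δ` as an algebra homomorphism `H ⊗ H → H ⊗ (H ⊗ H)`. -/
def idTensorComul (R H : Type*) [CommRing R] [Ring H] [Bialgebra R H] :
    (H ⊗[R] H) →ₐ[R] H ⊗[R] (H ⊗[R] H) :=
  Algebra.TensorProduct.map (AlgHom.id R H) (Bialgebra.comulAlgHom R H)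

/-- `F` is a Drinfel'd twist on the bialgebra `H` with two-sided inverse `Finv`:
it is invertible and satisfies the 2-cocycle condition
`(F ⊗ 1) · (Δ ⊗ id)(F) = (1 ⊗ F) · (id ⊗ Δ)(F)` in `H ⊗ H ⊗ H`. -/
def IsDrinfeldTwist (R : Type*) {H : Type*} [CommRing R] [Ring H] [Bialgebra R H]
    (F Finv : H ⊗[R] H) : Prop :=
  F * Finv = 1 ∧ Finv * F = 1 ∧
    (TensorProduct.assoc R H H H) ((F ⊗ₜ[R] (1 : H)) * comulTensorId R H F) =
      ((1 : H) ⊗ₜ[R] F) * idTensorComul R H F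

/-- The `R`-matrix `ℛ := F₂₁ · F⁻¹` associated to a Drinfel'd twist, where
`F₂₁ = τ(F)` and `τ` is the flip of `H ⊗ H`. -/
def Rmat (R : Type*) {H : Type*} [CommRing R] [Ring H] [Bialgebra R H]
    (F Finv : H ⊗[R] H) : H ⊗[R] H :=
  (Algebra.TensorProduct.comm R H H) F * Finv

/-- The action of an element of `H ⊗ H` on `M ⊗ N`, acting with the first leg on `M`
and the second leg on `N` through the given representations. -/
def legAct {R H : Type*} [CommRing R] [Ring H] [Algebra R H]
    {M N : Type*} [AddCommGroup M] [Module R M] [AddCommGroup N] [Module R N]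
    (ρM : H →ₐ[R] Module.End R M) (ρN : H →ₐ[R] Module.End R N) :
    H ⊗[R] H →ₗ[R] (M ⊗[R] N →ₗ[R] M ⊗[R] N) :=
  (TensorProduct.homTensorHomMap (RingHom.id R) M N M N).comp
    (TensorProduct.map ρM.toLinearMap ρN.toLinearMap)

/-- The Lie bracket of `L` as an `R`-bilinear map. -/
def lieBil (R L : Type*) [CommRing R] [LieRing L] [LieAlgebra R L] :
    L →ₗ[R] L →ₗ[R] L :=
  LinearMap.mk₂ R (fun x y => ⁅x, y⁆) add_lie smul_lie lie_add lie_smul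

/-- `ρ` makes the `R`-Lie algebra `L` into a Lie algebra in `H`-modules:
`ρ(h)⁅x, y⁆ = Σ ⁅ρ(h₍₁₎)(x), ρ(h₍₂₎)(y)⁆`. -/
def IsHLieAlgebra (R : Type*) {H L : Type*} [CommRing R] [Ring H] [Bialgebra R H]
    [LieRing L] [LieAlgebra R L] (ρ : H →ₐ[R] Module.End R L) : Prop :=
  ∀ (h : H) (x y : L),
    ρ h ⁅x, y⁆ =
      TensorProduct.lift (lieBil R L)
        (legAct ρ ρ (Coalgebra.comul (R := R) h) (x ⊗ₜ[R] y))

/-- The twisted bracket `[x, y]_⋆ := Σ ⁅f̄ᵏ(x), f̄ₖ(y)⁆`, as a linear map on `L ⊗ L`. -/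
def starBracket {R H L : Type*} [CommRing R] [Ring H] [Bialgebra R H]
    [LieRing L] [LieAlgebra R L] (ρ : H →ₐ[R] Module.End R L) (Finv : H ⊗[R] H) :
    L ⊗[R] L →ₗ[R] L :=
  (TensorProduct.lift (lieBil R L)).comp (legAct ρ ρ Finv)

/-!
Since `τ(ℛ) = F · τ(F⁻¹)`, twisting by `τ(ℛ)` and then applying `F⁻¹` acts on `L ⊗ L` as
`τ(F⁻¹)`; braided antisymmetry of `[·,·]_⋆` is therefore the plain antisymmetry of `⁅·,·⁆`
applied to `F⁻¹ (x ⊗ y)`.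
-/

section legAct

variable {R H : Type*} [CommRing R] [Ring H] [Algebra R H]
  {M N : Type*} [AddCommGroup M] [Module R M] [AddCommGroup N] [Module R N]
  (ρM : H →ₐ[R] Module.End R M) (ρN : H →ₐ[R] Module.End R N)

@[simp]
lemma legAct_tmul (a b : H) (m : M) (n : N) :
    legAct ρM ρN (a ⊗ₜ[R] b) (m ⊗ₜ[R] n) = ρM a m ⊗ₜ[R] ρN b n := by
  simp [legAct]

lemma legAct_mul (a b : H ⊗[R] H) :
    legAct ρM ρN (a * b) = legAct ρM ρN a ∘ₗ legAct ρM ρN b := by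
  induction a using TensorProduct.induction_on with
  | zero => simp
  | add a₁ a₂ h₁ h₂ => simp only [add_mul, map_add, h₁, h₂, LinearMap.add_comp]
  | tmul a₁ a₂ =>
    induction b using TensorProduct.induction_on with
    | zero => simp
    | add b₁ b₂ h₁ h₂ => simp only [mul_add, map_add, h₁, h₂, LinearMap.comp_add]
    | tmul b₁ b₂ =>
      ext m n
      simp [Algebra.TensorProduct.tmul_mul_tmul, Module.End.mul_apply]

end legAct

lemma mul_comm_Rmat_of_mul_eq_one {R H : Type*} [CommRing R] [Ring H] [Bialgebra R H]
    {F Finv : H ⊗[R] H} (h : Finv * F = 1) :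
    Finv * Algebra.TensorProduct.comm R H H (Rmat R F Finv) =
      Algebra.TensorProduct.comm R H H Finv := by
  have hF : Algebra.TensorProduct.comm R H H (Algebra.TensorProduct.comm R H H F) = F :=
    TensorProduct.comm_comm R H H F
  rw [Rmat, map_mul, hF, ← mul_assoc, h, one_mul]

section starBracket

variable {R H L : Type*} [CommRing R] [Ring H] [Bialgebra R H]
  [LieRing L] [LieAlgebra R L] (ρ : H →ₐ[R] Module.End R L)

lemma starBracket_legAct (Finv G : H ⊗[R] H) (t : L ⊗[R] L) :
    starBracket ρ Finv (legAct ρ ρ G t) =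
      TensorProduct.lift (lieBil R L) (legAct ρ ρ (Finv * G) t) := by
  rw [starBracket, legAct_mul]
  rfl

lemma lift_lieBil_legAct_comm (G : H ⊗[R] H) (x y : L) :
    TensorProduct.lift (lieBil R L) (legAct ρ ρ G (x ⊗ₜ[R] y)) =
      - TensorProduct.lift (lieBil R L)
          (legAct ρ ρ (Algebra.TensorProduct.comm R H H G) (y ⊗ₜ[R] x)) := by
  induction G using TensorProduct.induction_on with
  | zero => simp
  | tmul a b => simp [lieBil]
  | add a b ha hb => simp only [map_add, LinearMap.add_apply, ha, hb, neg_add]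

end starBracket

theorem starBracket_braided_antisymm_general
    (R : Type*) [CommRing R] (H : Type*) [Ring H] [Bialgebra R H]
    (L : Type*) [LieRing L] [LieAlgebra R L]
    (ρ : H →ₐ[R] Module.End R L)
    (F Finv : H ⊗[R] H) (hF : IsDrinfeldTwist R F Finv) :
    ∀ x y : L,
      starBracket ρ Finv (x ⊗ₜ[R] y) =
        - starBracket ρ Finv
            (legAct ρ ρ ((Algebra.TensorProduct.comm R H H) (Rmat R F Finv))
              (y ⊗ₜ[R] x)) := by
  intro x y
  rw [starBracket_legAct, mul_comm_Rmat_of_mul_eq_one hF.2.1, starBracket]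
  exact lift_lieBil_legAct_comm ρ Finv x y

/-- For a Drinfel'd twist on `H` and a Lie algebra `L` in `H`-modules,
the twisted bracket is braided antisymmetric: `[x, y]_⋆ = −Σ_k [R_k(y), R^k(x)]_⋆`,
where `ℛ⁻¹ = τ(ℛ) = Σ_k R_k ⊗ R^k`. -/
theorem starBracket_braided_antisymm
    (R : Type*) [CommRing R] (H : Type*) [Ring H] [Bialgebra R H]
    (L : Type*) [LieRing L] [LieAlgebra R L]
    (ρ : H →ₐ[R] Module.End R L) (hL : IsHLieAlgebra R ρ)
    (F Finv : H ⊗[R] H) (hF : IsDrinfeldTwist R F Finv) :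
    ∀ x y : L,
      starBracket ρ Finv (x ⊗ₜ[R] y) =
        - starBracket ρ Finv
            (legAct ρ ρ ((Algebra.TensorProduct.comm R H H) (Rmat R F Finv))
              (y ⊗ₜ[R] x)) :=
  starBracket_braided_antisymm_general R H L ρ F Finv hF
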